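/- arXiv:1911.02841 — 2 statements merged into one kernel-verified Lean document; each statement's English description precedes it below -/
import Mathlib

section
/- Let α>-1 and x∈ℂ be fixed. Then as q tends to 1 from below, cos_α((1-q)x;q²) tends to the hypergeometric series ₀F₁(—;α+1;-x²/4) = Σ_{k=0}^∞ (-x²/4)^k / (k! (α+1)_k), where (α+1)_k = (α+1)(α+2)⋯(α+k) is the Pochhammer symbol. -/
noncomputable section

open Complex Filter Topology

/-- Finite q-Pochhammer symbol (a;q)ₖ over ℂ. -/
def qPoch (a q : ℂ) (k : ℕ) : ℂ := ∏ j ∈ Finset.range k, (1 - a * q ^ j)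

/-- Finite q-Pochhammer symbol (a;q)ₖ over ℝ. -/
def qPochR (a q : ℝ) (k : ℕ) : ℝ := ∏ j ∈ Finset.range k, (1 - a * q ^ j)

/-- Infinite q-Pochhammer symbol (a;q)_∞ over ℝ. -/
def qPochInf (a q : ℝ) : ℝ := ∏' k : ℕ, (1 - a * q ^ k)

/-- k-th term of the generalized q²-cosine series cos_α(x;q²). -/
def qCosTerm (q α : ℝ) (x : ℂ) (k : ℕ) : ℂ :=
  (-1) ^ k * (q : ℂ) ^ (k * (k + 1)) * x ^ (2 * k) /
    (qPoch ((q ^ (2 * α + 2 : ℝ) : ℝ) : ℂ) ((q : ℂ) ^ 2) k *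
      qPoch ((q : ℂ) ^ 2) ((q : ℂ) ^ 2) k)

/-- Generalized q²-cosine cos_α(x;q²). -/
def qCos (q α : ℝ) (x : ℂ) : ℂ := ∑' k : ℕ, qCosTerm q α x k

/-- k-th term of the generalized q²-sine series sin_α(x;q²). -/
def qSinTerm (q α : ℝ) (x : ℂ) (k : ℕ) : ℂ :=
  (-1) ^ k * (q : ℂ) ^ (k * (k + 1)) * x ^ (2 * k + 1) /
    (qPoch ((q ^ (2 * α + 2 : ℝ) : ℝ) : ℂ) ((q : ℂ) ^ 2) (k + 1) *
      qPoch ((q : ℂ) ^ 2) ((q : ℂ) ^ 2) k)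

/-- Generalized q²-sine sin_α(x;q²). -/
def qSin (q α : ℝ) (x : ℂ) : ℂ := ∑' k : ℕ, qSinTerm q α x k

/-- Generalized q²-exponential e_α(x;q²) = cos_α(-ix;q²) + i·sin_α(-ix;q²). -/
def qExp (q α : ℝ) (x : ℂ) : ℂ :=
  qCos q α (-Complex.I * x) + Complex.I * qSin q α (-Complex.I * x)

/-- The constant C_{α,q} = (1-q)^α (q^{2α+2};q²)_∞ / (2 (q²;q²)_∞). -/
def Cconst (q α : ℝ) : ℝ :=
  (1 - q) ^ α * qPochInf (q ^ (2 * α + 2 : ℝ)) (q ^ 2) / (2 * qPochInf (q ^ 2) (q ^ 2))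

/-- Bilateral q-Jackson integral ∫_{-∞}^∞ F(x) d_q x, for a ℂ-valued integrand. -/
def jacksonBi (q : ℝ) (F : ℝ → ℂ) : ℂ :=
  ((1 - q : ℝ) : ℂ) * ∑' n : ℤ, (q : ℂ) ^ n * (F (q ^ n) + F (-(q ^ n)))

/-- Bilateral q-Jackson integral ∫_{-∞}^∞ F(x) d_q x, for an ℝ-valued integrand. -/
def jacksonBiR (q : ℝ) (F : ℝ → ℝ) : ℝ :=
  (1 - q) * ∑' n : ℤ, q ^ n * (F (q ^ n) + F (-(q ^ n)))

/-- Generalized q²-Fourier transform f̂(x;q²). -/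
def qFourier (q α : ℝ) (f : ℝ → ℂ) (x : ℝ) : ℂ :=
  (Cconst q α : ℂ) * jacksonBi q (fun t =>
    f t * qExp q α (-Complex.I * (((1 - q) * t * x : ℝ) : ℂ)) * ((|t| ^ (2 * α + 1) : ℝ) : ℂ))

/-- Generalized q-differential operator ∂_{q,α} (for x ≠ 0). -/
def qDeriv (q α : ℝ) (f : ℝ → ℂ) (x : ℝ) : ℂ :=
  (f (q⁻¹ * x) + f (-(q⁻¹ * x)) - ((q ^ (2 * α + 1 : ℝ) : ℝ) : ℂ) * (f x + f (-x))) /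
      (2 * ((1 - q : ℝ) : ℂ) * (x : ℂ)) +
    (f x - f (-x) - ((q ^ (2 * α + 1 : ℝ) : ℝ) : ℂ) * (f (q * x) - f (-(q * x)))) /
      (2 * ((1 - q : ℝ) : ℂ) * (x : ℂ))

/-- q-number [x]_q = (1 - q^x)/(1 - q). -/
def qBracket (q x : ℝ) : ℝ := (1 - q ^ x) / (1 - q)

/-- Generalized q-factorial [m]_{q,α}! = ∏_{j=1}^m [j]_{q,α}, where
[2n]_{q,α} = [2n+2α+1]_q and [2n+1]_{q,α} = [2n+2α+2]_q (both equal [j+2α+1]_q for j = 2n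
resp. j = 2n+1). -/
def qFactG (q α : ℝ) (m : ℕ) : ℝ :=
  ∏ j ∈ Finset.range m, qBracket q ((j : ℝ) + 1 + 2 * α + 1)

/-- Generalized q-shifted factorial (q;q)_{m,α} = (1-q)^m [m]_{q,α}!. -/
def qShiftG (q α : ℝ) (m : ℕ) : ℝ := (1 - q) ^ m * qFactG q α m

/-- q-Gamma function Γ_q(z) = ((q;q)_∞/(q^z;q)_∞)(1-q)^{1-z}. -/
def qGammaF (q z : ℝ) : ℝ := qPochInf q q / qPochInf (q ^ z) q * (1 - q) ^ (1 - z)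

/-!
Substituting `(1 - q) x` turns the `k`-th term of `cos_α` into
`q^{k(k+1)} ∏_{j<k} -x² / ([2α+2+2j]_q [2+2j]_q)`, and `[β]_q → β` as `q → 1`, being the
difference quotient of `q ↦ q^β` at `1`; so the series converges termwise to `₀F₁`. To pass to
the limit under the sum (Tannery), the elementary bound `1 / [β]_q ≤ 1 / β + (1 - q)` dominates
the terms, for `1 - q ≤ t`, by products whose factors tend to `‖x‖² t²`, which is `< 1` for
small `t`.
-/

lemma summable_prod_range_of_tendsto {R : Type*} [NormedCommRing R] [CompleteSpace R]
    {f : ℕ → R} {l : R} (hf : Tendsto f atTop (𝓝 l)) (hl : ‖l‖ < 1) :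
    Summable fun k => ∏ j ∈ Finset.range k, f j := by
  obtain ⟨r, hlr, hr1⟩ := exists_between hl
  refine summable_of_ratio_norm_eventually_le hr1 ?_
  filter_upwards [(hf.norm.eventually (gt_mem_nhds hlr))] with n hn
  rw [Finset.prod_range_succ, mul_comm r]
  exact (norm_mul_le _ _).trans (mul_le_mul_of_nonneg_left hn.le (norm_nonneg _))

section qBracket

variable {q β : ℝ}

lemma qBracket_pos (hq0 : 0 < q) (hq1 : q < 1) (hβ : 0 < β) : 0 < qBracket q β :=
  div_pos (sub_pos.2 (Real.rpow_lt_one hq0.le hq1 hβ)) (sub_pos.2 hq1)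

lemma one_sub_mul_qBracket (hq1 : q ≠ 1) : (1 - q) * qBracket q β = 1 - q ^ β :=
  mul_div_cancel₀ _ (sub_ne_zero.2 hq1.symm)

lemma inv_qBracket_le (hq0 : 0 < q) (hq1 : q < 1) (hβ : 0 < β) :
    (qBracket q β)⁻¹ ≤ β⁻¹ + (1 - q) := by
  set s := β * (1 - q)
  -- `q ≤ exp (q - 1)` and `1 + s ≤ exp s` give `q ^ β ≤ exp (-s) ≤ 1 / (1 + s)`.
  have hq_exp : q ^ β ≤ Real.exp (-s) := by
    calc q ^ β ≤ Real.exp (q - 1) ^ β :=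
          Real.rpow_le_rpow hq0.le (by linarith [Real.add_one_le_exp (q - 1)]) hβ.le
      _ = Real.exp (-s) := by rw [← Real.exp_mul]; congr 1; ring
  have hexp : Real.exp (-s) * (1 + s) ≤ 1 := by
    rw [Real.exp_neg, inv_mul_le_one₀ (Real.exp_pos s)]
    linarith [Real.add_one_le_exp s]
  have hs : 0 ≤ s := mul_nonneg hβ.le (sub_nonneg.2 hq1.le)
  have hqβ : q ^ β * (1 + s) ≤ 1 :=
    (mul_le_mul_of_nonneg_right hq_exp (by linarith)).trans hexp
  rw [qBracket, inv_div, div_le_iff₀ (sub_pos.2 (Real.rpow_lt_one hq0.le hq1 hβ)),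
    show β⁻¹ + (1 - q) = (1 + s) / β by field_simp; ring, div_mul_eq_mul_div, le_div_iff₀ hβ]
  nlinarith

lemma tendsto_qBracket (β : ℝ) : Tendsto (qBracket · β) (𝓝[≠] 1) (𝓝 β) := by
  have hderiv : HasDerivAt (· ^ β) β (1 : ℝ) := by
    simpa using Real.hasDerivAt_rpow_const (x := 1) (p := β) (Or.inl one_ne_zero)
  refine (hasDerivAt_iff_tendsto_slope.1 hderiv).congr fun q => ?_
  rw [slope_def_field, Real.one_rpow, qBracket, ← neg_div_neg_eq]
  ring_nf

end qBracket

lemma qPoch_rpow_sq {q : ℝ} (hq0 : 0 < q) (hq1 : q ≠ 1) (a : ℝ) (k : ℕ) :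
    qPoch ((q ^ a : ℝ) : ℂ) ((q : ℂ) ^ 2) k =
      ((1 - q : ℝ) : ℂ) ^ k * ∏ j ∈ Finset.range k, (qBracket q (a + 2 * j) : ℂ) := by
  rw [Finset.pow_eq_prod_const _ k, ← Finset.prod_mul_distrib, qPoch]
  refine Finset.prod_congr rfl fun j _ => ?_
  rw [← Complex.ofReal_mul, one_sub_mul_qBracket hq1, Real.rpow_add hq0,
    show 2 * (j : ℝ) = ((2 * j : ℕ) : ℝ) by push_cast; ring, Real.rpow_natCast, pow_mul]
  push_cast
  ring

lemma qCosTerm_one_sub_mul {q : ℝ} (hq0 : 0 < q) (hq1 : q ≠ 1) (α : ℝ) (x : ℂ) (k : ℕ) :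
    qCosTerm q α (((1 - q : ℝ) : ℂ) * x) k = (q : ℂ) ^ (k * (k + 1)) *
      ∏ j ∈ Finset.range k, -x ^ 2 *
        (((qBracket q (2 * α + 2 + 2 * j))⁻¹ * (qBracket q (2 + 2 * j))⁻¹ : ℝ) : ℂ) := by
  have hsq := qPoch_rpow_sq hq0 hq1 2 k
  rw [Real.rpow_two, Complex.ofReal_pow] at hsq
  have hq1' : ((1 - q : ℝ) : ℂ) ≠ 0 := Complex.ofReal_ne_zero.2 (sub_ne_zero.2 hq1.symm)
  rw [qCosTerm, qPoch_rpow_sq hq0 hq1, hsq]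
  simp only [Complex.ofReal_mul, Complex.ofReal_inv, Finset.prod_mul_distrib, Finset.prod_const,
    Finset.card_range, Finset.prod_inv_distrib]
  field_simp
  ring

lemma hypergeomTerm_eq_prod (α : ℝ) (x : ℂ) (k : ℕ) :
    (-x ^ 2 / 4) ^ k / ((k.factorial : ℂ) * ∏ j ∈ Finset.range k, ((α : ℂ) + 1 + (j : ℂ))) =
      ∏ j ∈ Finset.range k, -x ^ 2 * (((2 * α + 2 + 2 * j)⁻¹ * (2 + 2 * (j : ℝ))⁻¹ : ℝ) : ℂ) := by
  have hfactor (j : ℕ) : -x ^ 2 * (((2 * α + 2 + 2 * j)⁻¹ * (2 + 2 * (j : ℝ))⁻¹ : ℝ) : ℂ) =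
      -x ^ 2 / 4 * (((α : ℂ) + 1 + j)⁻¹ * ((j : ℂ) + 1)⁻¹) := by
    rw [show 2 * α + 2 + 2 * j = 2 * (α + 1 + j) by ring,
      show 2 + 2 * (j : ℝ) = 2 * (j + 1) by ring]
    push_cast
    rw [mul_inv, mul_inv]
    ring
  simp only [hfactor, Finset.prod_mul_distrib, Finset.prod_const, Finset.card_range,
    Finset.prod_inv_distrib, ← Finset.prod_range_add_one_eq_factorial, Nat.cast_prod]
  push_cast
  ring

lemma tendsto_inv_add_two_mul_atTop (a : ℝ) :
    Tendsto (fun j : ℕ => (a + 2 * (j : ℝ))⁻¹) atTop (𝓝 0) :=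
  tendsto_inv_atTop_zero.comp <| tendsto_atTop_add_const_left _ a <|
    tendsto_natCast_atTop_atTop.const_mul_atTop two_pos

lemma tendsto_qCosTerm {α : ℝ} (hα : -1 < α) (x : ℂ) (k : ℕ) :
    Tendsto (fun q : ℝ => qCosTerm q α (((1 - q : ℝ) : ℂ) * x) k) (𝓝[Set.Ioo 0 1] 1)
      (𝓝 ((-x ^ 2 / 4) ^ k /
        ((k.factorial : ℂ) * ∏ j ∈ Finset.range k, ((α : ℂ) + 1 + (j : ℂ))))) := by
  have hF : 𝓝[Set.Ioo (0 : ℝ) 1] 1 ≤ 𝓝[≠] 1 := nhdsWithin_mono _ fun q hq => hq.2.ne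
  rw [hypergeomTerm_eq_prod, ← one_mul (Finset.prod _ _)]
  refine tendsto_nhdsWithin_congr (fun q hq => (qCosTerm_one_sub_mul hq.1 hq.2.ne α x k).symm)
    (Tendsto.mul ?_ (tendsto_finsetProd _ fun j _ => ?_))
  · simpa using ((Complex.continuous_ofReal.tendsto (1 : ℝ)).pow (k * (k + 1))).mono_left
      nhdsWithin_le_nhds
  · have hβ : 2 * α + 2 + 2 * (j : ℝ) ≠ 0 := by linarith [j.cast_nonneg (α := ℝ)]
    have hβ' : 2 + 2 * (j : ℝ) ≠ 0 := by positivity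
    exact tendsto_const_nhds.mul <| (Complex.continuous_ofReal.tendsto _).comp <|
      (((tendsto_qBracket _).inv₀ hβ).mul ((tendsto_qBracket _).inv₀ hβ')).mono_left hF

lemma norm_qCosTerm_le {α : ℝ} (hα : -1 < α) (x : ℂ) {q t : ℝ} (hq0 : 0 < q) (hq1 : q < 1)
    (hqt : 1 - q ≤ t) (k : ℕ) :
    ‖qCosTerm q α (((1 - q : ℝ) : ℂ) * x) k‖ ≤
      ∏ j ∈ Finset.range k,
        ‖x‖ ^ 2 * (((2 * α + 2 + 2 * j)⁻¹ + t) * ((2 + 2 * (j : ℝ))⁻¹ + t)) := by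
  rw [qCosTerm_one_sub_mul hq0 hq1.ne, norm_mul, norm_prod]
  refine (mul_le_of_le_one_left (by positivity) ?_).trans (Finset.prod_le_prod
    (fun _ _ => norm_nonneg _) fun j _ => ?_)
  · simpa [abs_of_pos hq0] using pow_le_one₀ (n := k * (k + 1)) hq0.le hq1.le
  have hβ : 0 < 2 * α + 2 + 2 * (j : ℝ) := by linarith [j.cast_nonneg (α := ℝ)]
  have hβ' : 0 < 2 + 2 * (j : ℝ) := by positivity
  have hB := qBracket_pos hq0 hq1 hβ
  have hB' := qBracket_pos hq0 hq1 hβ'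
  rw [norm_mul, norm_neg, norm_pow, Complex.norm_real, Real.norm_of_nonneg (by positivity)]
  exact mul_le_mul_of_nonneg_left (mul_le_mul
    ((inv_qBracket_le hq0 hq1 hβ).trans (by linarith))
    ((inv_qBracket_le hq0 hq1 hβ').trans (by linarith)) (by positivity)
    (by linarith [inv_pos.2 hβ])) (by positivity)

lemma summable_qCos_majorant (α : ℝ) (x : ℂ) {t : ℝ} (hxt : ‖x‖ ^ 2 * t ^ 2 < 1) :
    Summable fun k => ∏ j ∈ Finset.range k,
      ‖x‖ ^ 2 * (((2 * α + 2 + 2 * j)⁻¹ + t) * ((2 + 2 * (j : ℝ))⁻¹ + t)) := by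
  refine summable_prod_range_of_tendsto (l := ‖x‖ ^ 2 * ((0 + t) * (0 + t))) ?_ ?_
  · exact tendsto_const_nhds.mul
      (((tendsto_inv_add_two_mul_atTop _).add_const t).mul
        ((tendsto_inv_add_two_mul_atTop 2).add_const t))
  · rwa [show ‖x‖ ^ 2 * ((0 + t) * (0 + t)) = ‖x‖ ^ 2 * t ^ 2 by ring,
      Real.norm_of_nonneg (by positivity)]

/-- lim_{q→1⁻} cos_α((1-q)x;q²) = ₀F₁(—;α+1;-x²/4). -/
theorem qCos_tendsto_hypergeom (α : ℝ) (hα : -1 < α) (x : ℂ) :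
    Filter.Tendsto (fun q : ℝ => qCos q α (((1 - q : ℝ) : ℂ) * x))
      (nhdsWithin 1 (Set.Ioo 0 1))
      (nhds (∑' k : ℕ, (-x ^ 2 / 4) ^ k /
        ((k.factorial : ℂ) * ∏ j ∈ Finset.range k, ((α : ℂ) + 1 + (j : ℂ))))) := by
  obtain ⟨t, ht, hxt⟩ : ∃ t : ℝ, 0 < t ∧ ‖x‖ ^ 2 * t ^ 2 < 1 := by
    refine ⟨(‖x‖ + 1)⁻¹, by positivity, ?_⟩
    rw [← mul_pow, ← div_eq_mul_inv]
    exact pow_lt_one₀ (by positivity) ((div_lt_one (by positivity)).2 (by linarith)) two_ne_zero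
  refine tendsto_tsum_of_dominated_convergence (summable_qCos_majorant α x hxt)
    (tendsto_qCosTerm hα x) ?_
  filter_upwards [self_mem_nhdsWithin,
    (eventually_gt_nhds (sub_lt_self 1 ht)).filter_mono nhdsWithin_le_nhds] with q hq hqt k
  exact norm_qCosTerm_le hα x hq.1 hq.2 (by linarith) k
end
end

section
/- Let x∈ℂ be fixed. Then as q tends to 1 from below, sin_{-1/2}((1-q)x;q²) tends to sin x, where sin_{-1/2}(y;q²) = Σ_{k=0}^∞ (-1)^k q^{k(k+1)} y^{2k+1} / ((q;q²)_{k+1} (q²;q²)_k). -/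
noncomputable section

open Complex Filter Topology

/-!
At `α = -1/2` the two Pochhammer symbols of the `k`-th denominator interleave into
`∏_{j ≤ 2k} (1 - q^(j+1)) = (1 - q)^(2k+1) [2k+1]_q!`, where `[n]_q! = qFactorial q n`. So after
the substitution `x ↦ (1 - q) x` the `k`-th term is `(-1)^k q^(k(k+1)) x^(2k+1) / [2k+1]_q!`,
which tends to the `k`-th term of the sine series. For `p ≤ q < 1` these terms are dominated by
`‖x‖^(2k+1) / [2k+1]_p!`, summable by the ratio test once `‖x‖ (1 - p) < 1` because
`[n]_p → 1 / (1 - p)`; Tannery's theorem lets the limit pass through the sum.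
-/

open Finset

section QFactorial

variable {R : Type*}

def qFactorial [CommSemiring R] (q : R) (n : ℕ) : R :=
  ∏ j ∈ range n, ∑ i ∈ range (j + 1), q ^ i

theorem qFactorial_succ [CommSemiring R] (q : R) (n : ℕ) :
    qFactorial q (n + 1) = qFactorial q n * ∑ i ∈ range (n + 1), q ^ i :=
  prod_range_succ _ _

@[simp]
theorem qFactorial_one [CommSemiring R] (n : ℕ) : qFactorial (1 : R) n = n.factorial := by
  simp [qFactorial, ← prod_range_add_one_eq_factorial]

theorem map_qFactorial [CommSemiring R] {S : Type*} [CommSemiring S] (f : R →+* S) (q : R)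
    (n : ℕ) : f (qFactorial q n) = qFactorial (f q) n := by
  simp [qFactorial, map_prod, map_sum, map_pow]

theorem one_sub_pow_mul_qFactorial [CommRing R] (q : R) (n : ℕ) :
    (1 - q) ^ n * qFactorial q n = ∏ j ∈ range n, (1 - q ^ (j + 1)) := by
  rw [qFactorial, ← card_range n, ← prod_const, card_range, ← prod_mul_distrib]
  exact prod_congr rfl fun j _ => mul_neg_geom_sum q (j + 1)

theorem continuous_qFactorial [CommSemiring R] [TopologicalSpace R] [IsTopologicalSemiring R]
    (n : ℕ) : Continuous fun q : R => qFactorial q n :=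
  continuous_finsetProd _ fun _ _ => continuous_finsetSum _ fun i _ => continuous_pow i

end QFactorial

theorem one_le_qFactorial {q : ℝ} (hq : 0 ≤ q) (n : ℕ) : 1 ≤ qFactorial q n :=
  one_le_prod fun j _ => by
    rw [sum_range_succ']
    simpa using sum_nonneg fun i _ => pow_nonneg hq (i + 1)

theorem qFactorial_le_qFactorial {p q : ℝ} (hp : 0 ≤ p) (hpq : p ≤ q) (n : ℕ) :
    qFactorial p n ≤ qFactorial q n :=
  prod_le_prod (fun _ _ => sum_nonneg fun i _ => pow_nonneg hp i)
    fun _ _ => sum_le_sum fun i _ => pow_le_pow_left₀ hp hpq i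

theorem summable_pow_div_qFactorial {q r : ℝ} (hq₀ : 0 ≤ q) (hq₁ : q < 1) (hr : 0 ≤ r)
    (hrq : r * (1 - q) < 1) : Summable fun n => r ^ n / qFactorial q n := by
  have hratio : Tendsto (fun n : ℕ => r / ∑ i ∈ range (n + 1), q ^ i) atTop
      (𝓝 (r * (1 - q))) := by
    have hgeom := (hasSum_geometric_of_lt_one hq₀ hq₁).tendsto_sum_nat.comp
      (tendsto_add_atTop_nat 1)
    simpa [div_eq_mul_inv] using
      (hgeom.inv₀ (inv_ne_zero (sub_ne_zero.2 hq₁.ne'))).const_mul r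
  obtain ⟨c, hrc, hc⟩ := exists_between hrq
  refine summable_of_ratio_norm_eventually_le hc ?_
  filter_upwards [hratio.eventually (eventually_le_nhds hrc)] with n hn
  have hpos n : 0 < qFactorial q n := one_pos.trans_le (one_le_qFactorial hq₀ n)
  rw [Real.norm_of_nonneg (div_nonneg (pow_nonneg hr _) (hpos _).le),
    Real.norm_of_nonneg (div_nonneg (pow_nonneg hr _) (hpos _).le), qFactorial_succ, pow_succ]
  calc r ^ n * r / (qFactorial q n * ∑ i ∈ range (n + 1), q ^ i)
      = r / (∑ i ∈ range (n + 1), q ^ i) * (r ^ n / qFactorial q n) := by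
        rw [div_mul_div_comm, mul_comm r, mul_comm (∑ i ∈ range (n + 1), q ^ i)]
    _ ≤ c * (r ^ n / qFactorial q n) :=
        mul_le_mul_of_nonneg_right hn (div_nonneg (pow_nonneg hr n) (hpos n).le)

@[simp, norm_cast]
theorem ofReal_qFactorial (q : ℝ) (n : ℕ) : ((qFactorial q n : ℝ) : ℂ) = qFactorial (q : ℂ) n :=
  map_qFactorial Complex.ofRealHom q n

theorem qPoch_succ (a q : ℂ) (n : ℕ) : qPoch a q (n + 1) = qPoch a q n * (1 - a * q ^ n) :=
  prod_range_succ _ _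

theorem qPoch_mul_qPoch_sq (c : ℂ) (k : ℕ) :
    qPoch c (c ^ 2) (k + 1) * qPoch (c ^ 2) (c ^ 2) k =
      ∏ j ∈ range (2 * k + 1), (1 - c ^ (j + 1)) := by
  induction k with
  | zero => simp [qPoch]
  | succ k ih =>
    rw [qPoch_succ c _ (k + 1), qPoch_succ (c ^ 2) _ k,
      show 2 * (k + 1) + 1 = 2 * k + 1 + 1 + 1 by ring, prod_range_succ, prod_range_succ, ← ih]
    ring

theorem qSinTerm_neg_half {q : ℝ} (hq : q ≠ 1) (x : ℂ) (k : ℕ) :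
    qSinTerm q (-(1 / 2)) (((1 - q : ℝ) : ℂ) * x) k =
      (-1) ^ k * (q : ℂ) ^ (k * (k + 1)) * x ^ (2 * k + 1) / qFactorial (q : ℂ) (2 * k + 1) := by
  have hq' : (1 - q : ℂ) ^ (2 * k + 1) ≠ 0 :=
    pow_ne_zero _ (sub_ne_zero.2 (by exact_mod_cast hq.symm))
  rw [qSinTerm, show 2 * (-(1 / 2) : ℝ) + 2 = 1 by norm_num, Real.rpow_one, qPoch_mul_qPoch_sq,
    ← one_sub_pow_mul_qFactorial, ← mul_div_mul_left _ (qFactorial (q : ℂ) _) hq',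
    Complex.ofReal_sub, Complex.ofReal_one, mul_pow]
  ring

theorem tendsto_qSinTerm_neg_half (x : ℂ) (k : ℕ) :
    Tendsto (fun q : ℝ => qSinTerm q (-(1 / 2)) (((1 - q : ℝ) : ℂ) * x) k) (𝓝[Set.Ioo 0 1] 1)
      (𝓝 ((-1) ^ k * x ^ (2 * k + 1) / (2 * k + 1).factorial)) := by
  have hnum : Continuous fun q : ℝ => (-1) ^ k * (q : ℂ) ^ (k * (k + 1)) * x ^ (2 * k + 1) := by
    fun_prop
  have hcont : ContinuousAt (fun q : ℝ =>
      (-1) ^ k * (q : ℂ) ^ (k * (k + 1)) * x ^ (2 * k + 1) / qFactorial (q : ℂ) (2 * k + 1)) 1 :=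
    hnum.continuousAt.div ((continuous_qFactorial _).comp continuous_ofReal).continuousAt
      (by simp [Nat.factorial_ne_zero])
  refine (hcont.tendsto.mono_left nhdsWithin_le_nhds).congr' ?_ |>.trans (by simp)
  filter_upwards [self_mem_nhdsWithin] with q hq
  exact (qSinTerm_neg_half hq.2.ne x k).symm

theorem norm_qSinTerm_neg_half_le {p q : ℝ} (hp : 0 ≤ p) (hpq : p ≤ q) (hq : q < 1) (x : ℂ)
    (k : ℕ) : ‖qSinTerm q (-(1 / 2)) (((1 - q : ℝ) : ℂ) * x) k‖ ≤
      ‖x‖ ^ (2 * k + 1) / qFactorial p (2 * k + 1) := by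
  have hq₀ : 0 ≤ q := hp.trans hpq
  rw [qSinTerm_neg_half hq.ne, ← ofReal_qFactorial, norm_div, norm_mul, norm_mul, norm_pow,
    norm_pow, norm_pow, Complex.norm_real, Complex.norm_real, norm_neg, norm_one, one_pow, one_mul,
    Real.norm_of_nonneg hq₀, Real.norm_of_nonneg (zero_le_one.trans (one_le_qFactorial hq₀ _))]
  have hFp : 0 < qFactorial p (2 * k + 1) := one_pos.trans_le (one_le_qFactorial hp _)
  calc q ^ (k * (k + 1)) * ‖x‖ ^ (2 * k + 1) / qFactorial q (2 * k + 1)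
      ≤ ‖x‖ ^ (2 * k + 1) / qFactorial q (2 * k + 1) :=
        div_le_div_of_nonneg_right (mul_le_of_le_one_left (by positivity) (pow_le_one₀ hq₀ hq.le))
          (hFp.trans_le (qFactorial_le_qFactorial hp hpq _)).le
    _ ≤ ‖x‖ ^ (2 * k + 1) / qFactorial p (2 * k + 1) :=
        div_le_div_of_nonneg_left (by positivity) hFp (qFactorial_le_qFactorial hp hpq _)

/-- lim_{q→1⁻} sin_{-1/2}((1-q)x;q²) = sin x. -/
theorem qSin_tendsto_sin (x : ℂ) :
    Filter.Tendsto (fun q : ℝ => qSin q (-(1 / 2)) (((1 - q : ℝ) : ℂ) * x))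
      (nhdsWithin 1 (Set.Ioo 0 1)) (nhds (Complex.sin x)) := by
  have hx₁ : 0 < ‖x‖ + 1 := by positivity
  set p : ℝ := ‖x‖ / (‖x‖ + 1)
  have hp : 0 ≤ p := by positivity
  have hp₁ : p < 1 := (div_lt_one hx₁).2 (lt_add_one _)
  have hxp : ‖x‖ * (1 - p) < 1 := by
    rw [one_sub_div hx₁.ne', add_sub_cancel_left, mul_one_div]
    exact hp₁
  have hsummable : Summable fun k : ℕ => ‖x‖ ^ (2 * k + 1) / qFactorial p (2 * k + 1) :=
    (summable_pow_div_qFactorial hp hp₁ (norm_nonneg x) hxp).comp_injective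
      fun a b h => by simpa using h
  rw [← (Complex.hasSum_sin x).tsum_eq]
  refine tendsto_tsum_of_dominated_convergence hsummable (tendsto_qSinTerm_neg_half x) ?_
  filter_upwards [self_mem_nhdsWithin, nhdsWithin_le_nhds (Ioi_mem_nhds hp₁)] with q hq hpq
  exact norm_qSinTerm_neg_half_le hp (le_of_lt hpq) hq.2 x
end
end
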